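/- If B₋ and B₊ are blue intervals and C is a red-ended coloured-interval with |B₋| > r(C) and |B₊| > r(C), then the closure of B₋ + C + B₊ is a single blue interval. -/

import Mathlib

open scoped Classical

/-- A recolouring step: the configuration (list of lengths of monochromatic intervals,
with colours alternating, determined by the colour of the first interval) contains three
consecutive intervals of lengths `a`, `b`, `c`, and the middle one, being strictly shorter
than both neighbours, is recoloured, merging the three into one of length `a + b + c`. -/
structure Step where
  pre : List ℝ
  a : ℝ
  b : ℝ
  c : ℝ
  post : List ℝ

namespace Step

/-- The configuration before the recolouring step. -/
def src (s : Step) : List ℝ := s.pre ++ s.a :: s.b :: s.c :: s.post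

/-- The configuration after the recolouring step. -/
def tgt (s : Step) : List ℝ := s.pre ++ (s.a + s.b + s.c) :: s.post

/-- A step is valid if the middle interval is strictly shorter than both neighbours. -/
def Valid (s : Step) : Prop := s.b < s.a ∧ s.b < s.c

/-- The set of points (identifying a configuration with a partition of `(0, total length]`
into half-open intervals) that get recoloured by the step: the middle interval. -/
def middle (s : Step) : Set ℝ :=
  Set.Ioc (s.pre.sum + s.a) (s.pre.sum + s.a + s.b)

end Step

/-- `Reduces l steps m`: starting from configuration `l`, performing the given sequence of
valid recolouring steps yields configuration `m`. -/
inductive Reduces : List ℝ → List Step → List ℝ → Prop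
  | nil (l : List ℝ) : Reduces l [] l
  | cons (s : Step) (hs : s.Valid) {steps : List Step} {m : List ℝ} :
      Reduces s.tgt steps m → Reduces s.src (s :: steps) m

/-- A configuration is closed if no further recolouring is possible; a sequence of
recolourings ending in a closed configuration is complete. -/
def IsClosedConfig (l : List ℝ) : Prop := ∀ s : Step, s.Valid → s.src ≠ l

/-- The number of times the point `x` is recoloured during a sequence of steps. -/
noncomputable def recolourCount (steps : List Step) (x : ℝ) : ℕ :=
  (steps.filter fun s => decide (x ∈ s.middle)).length

/-- Non-degeneracy: with `p_i` the boundary points (partial sums of the lengths),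
no two gap-distances coincide, i.e. `p_j - p_i ≠ p_k - p_j` for `i < j < k`. -/
def Nondegenerate (l : List ℝ) : Prop :=
  ∀ i j k : ℕ, i < j → j < k → k ≤ l.length →
    (l.take j).sum - (l.take i).sum ≠ (l.take k).sum - (l.take j).sum

/-- For a red-ended configuration (a list of lengths of odd length, the intervals at even
indices being red and those at odd indices blue), the total length of the red intervals. -/
def redSum (l : List ℝ) : ℝ :=
  ∑ i ∈ Finset.range l.length, if i % 2 = 0 then l.getD i 0 else 0


/-!
Recolouring is confluent: two valid steps on the same configuration coincide, overlap in one
interval (then both reach the merge of all five intervals in one more step) or are disjoint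
and commute, so by Church–Rosser every configuration has a unique closure. It therefore
suffices to exhibit one sequence of steps turning `B₋ + C + B₊` into a single interval.

First close `C` inside, which leaves `B₋` and `B₊` untouched. By non-degeneracy, adjacent
intervals of the closure of `C` have different lengths, so, having no local minimum, their
lengths first increase and then decrease. Every red interval is shorter than `r(C) < |B±|`,
so the red intervals can be absorbed one by one: from the left while the lengths increase,
and from the right along the decreasing part.
-/

open Relation

namespace Step

lemma sum_tgt (s : Step) : s.tgt.sum = s.src.sum := by
  simp only [src, tgt, List.sum_append, List.sum_cons]
  ring

lemma length_src (s : Step) : s.src.length = s.tgt.length + 2 := by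
  simp only [src, tgt, List.length_append, List.length_cons]
  omega

lemma tgt_pos {s : Step} (h : ∀ x ∈ s.src, 0 < x) : ∀ x ∈ s.tgt, 0 < x := by
  have ha := h s.a (by simp [src])
  have hb := h s.b (by simp [src])
  have hc := h s.c (by simp [src])
  intro x hx
  simp only [tgt, List.mem_append, List.mem_cons] at hx
  rcases hx with hx | rfl | hx
  · exact h x (by simp [src, hx])
  · positivity
  · exact h x (by simp [src, hx])

lemma sum_take_tgt (s : Step) (j : ℕ) :
    (s.tgt.take j).sum = (s.src.take (if j ≤ s.pre.length then j else j + 2)).sum := by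
  split_ifs with hj
  · simp [src, tgt, List.take_append, Nat.sub_eq_zero_of_le hj]
  · obtain ⟨k, rfl⟩ : ∃ k, j = s.pre.length + (k + 1) := ⟨j - s.pre.length - 1, by omega⟩
    have h₁ : s.pre.length + (k + 1) - s.pre.length = k + 1 := by omega
    have h₂ : s.pre.length + (k + 1) + 2 - s.pre.length = k + 3 := by omega
    simp only [src, tgt, List.take_append, h₁, h₂, List.take_succ_cons, List.sum_append,
      List.sum_cons, List.take_of_length_le (by omega : s.pre.length ≤ s.pre.length + (k + 1)),
      List.take_of_length_le (by omega : s.pre.length ≤ s.pre.length + (k + 1) + 2)]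
    ring

end Step

namespace Reduces

variable {l m : List ℝ} {s : List Step}

lemma sum_eq (h : Reduces l s m) : m.sum = l.sum := by
  induction h with
  | nil => rfl
  | cons t _ _ ih => rw [ih, t.sum_tgt]

lemma length_mod_two (h : Reduces l s m) : m.length % 2 = l.length % 2 := by
  induction h with
  | nil => rfl
  | cons t _ _ ih => rw [ih, t.length_src]; omega

lemma pos (h : Reduces l s m) (hl : ∀ x ∈ l, 0 < x) : ∀ x ∈ m, 0 < x := by
  induction h with
  | nil => exact hl
  | cons _ _ _ ih => exact ih (Step.tgt_pos hl)

end Reduces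

lemma forall_mem_cons_append_pos {x y : ℝ} {l : List ℝ} (hx : 0 < x) (hy : 0 < y)
    (hl : ∀ z ∈ l, 0 < z) : ∀ z ∈ x :: l ++ [y], 0 < z := by
  intro z hz
  simp only [List.cons_append, List.mem_cons, List.mem_append, List.not_mem_nil, or_false] at hz
  rcases hz with rfl | hz | rfl
  exacts [hx, hl z hz, hy]

/-- Positivity of the lengths is built into the relation: without it, two overlapping steps
need not be joinable. -/
def RecolourStep (l l' : List ℝ) : Prop :=
  (∀ x ∈ l, 0 < x) ∧ ∃ s : Step, s.Valid ∧ s.src = l ∧ s.tgt = l'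

lemma Step.recolourStep {s : Step} (hs : s.Valid) (hpos : ∀ x ∈ s.src, 0 < x) :
    RecolourStep s.src s.tgt :=
  ⟨hpos, s, hs, rfl, rfl⟩

lemma Reduces.reflTransGen {l m : List ℝ} {s : List Step} (h : Reduces l s m)
    (hl : ∀ x ∈ l, 0 < x) : ReflTransGen RecolourStep l m := by
  induction h with
  | nil => rfl
  | cons t ht _ ih => exact .head (t.recolourStep ht hl) (ih (Step.tgt_pos hl))

lemma RecolourStep.append_append {p q l l' : List ℝ} (hp : ∀ x ∈ p, 0 < x) (hq : ∀ x ∈ q, 0 < x)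
    (h : RecolourStep l l') : RecolourStep (p ++ l ++ q) (p ++ l' ++ q) := by
  obtain ⟨hpos, ⟨p', a, b, c, q'⟩, hs, rfl, rfl⟩ := h
  refine ⟨List.forall_mem_append.2 ⟨List.forall_mem_append.2 ⟨hp, hpos⟩, hq⟩,
    ⟨p ++ p', a, b, c, q' ++ q⟩, hs, by simp [Step.src], by simp [Step.tgt]⟩

lemma RecolourStep.reflTransGen_append_append {p q l l' : List ℝ} (hp : ∀ x ∈ p, 0 < x)
    (hq : ∀ x ∈ q, 0 < x) (h : ReflTransGen RecolourStep l l') :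
    ReflTransGen RecolourStep (p ++ l ++ q) (p ++ l' ++ q) :=
  ReflTransGen.lift (fun l => p ++ l ++ q) (fun _ _ => RecolourStep.append_append hp hq) _ _ h

lemma recolourStep_overlap {p q : List ℝ} {a b c d e : ℝ}
    (hpos : ∀ x ∈ p ++ a :: b :: c :: d :: e :: q, 0 < x)
    (hba : b < a) (hbc : b < c) (hdc : d < c) (hde : d < e) :
    RecolourStep (p ++ (a + b + c) :: d :: e :: q) (p ++ (a + b + c + d + e) :: q) ∧
      RecolourStep (p ++ a :: b :: (c + d + e) :: q) (p ++ (a + b + c + d + e) :: q) := by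
  have ha := hpos a (by simp)
  have hb := hpos b (by simp)
  have hd := hpos d (by simp)
  have he := hpos e (by simp)
  have hpos₁ := Step.tgt_pos (s := ⟨p, a, b, c, d :: e :: q⟩) hpos
  have hpos₂ := Step.tgt_pos (s := ⟨p ++ [a, b], c, d, e, q⟩) (by simpa [Step.src] using hpos)
  simp only [Step.tgt, List.append_assoc, List.cons_append, List.nil_append] at hpos₁ hpos₂
  refine ⟨⟨hpos₁, ⟨p, a + b + c, d, e, q⟩, ⟨by linarith, hde⟩, rfl, rfl⟩,
    ⟨hpos₂, ⟨p, a, b, c + d + e, q⟩, ⟨hba, by linarith⟩, rfl, ?_⟩⟩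
  simp only [Step.tgt]
  ring_nf

lemma recolourStep_disjoint {p r q : List ℝ} {a b c a' b' c' : ℝ}
    (hpos : ∀ x ∈ p ++ a :: b :: c :: (r ++ a' :: b' :: c' :: q), 0 < x)
    (h : b < a ∧ b < c) (h' : b' < a' ∧ b' < c') :
    RecolourStep (p ++ (a + b + c) :: (r ++ a' :: b' :: c' :: q))
        (p ++ (a + b + c) :: (r ++ (a' + b' + c') :: q)) ∧
      RecolourStep (p ++ a :: b :: c :: (r ++ (a' + b' + c') :: q))
        (p ++ (a + b + c) :: (r ++ (a' + b' + c') :: q)) := by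
  have hpos₁ := Step.tgt_pos (s := ⟨p, a, b, c, _⟩) hpos
  have hpos₂ := Step.tgt_pos (s := ⟨p ++ a :: b :: c :: r, a', b', c', q⟩)
    (by simpa [Step.src] using hpos)
  simp only [Step.tgt, List.append_assoc, List.cons_append] at hpos₁ hpos₂
  exact ⟨⟨hpos₁, ⟨p ++ (a + b + c) :: r, a', b', c', q⟩, h', by simp [Step.src],
      by simp [Step.tgt]⟩, ⟨hpos₂, ⟨p, a, b, c, r ++ (a' + b' + c') :: q⟩, h, rfl, rfl⟩⟩

lemma Step.exists_join_of_length_pre_le {t₁ t₂ : Step} (h : t₁.src = t₂.src)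
    (hv₁ : t₁.Valid) (hv₂ : t₂.Valid) (hpos : ∀ x ∈ t₁.src, 0 < x)
    (hle : t₁.pre.length ≤ t₂.pre.length) :
    ∃ d, ReflGen RecolourStep t₁.tgt d ∧ ReflGen RecolourStep t₂.tgt d := by
  obtain ⟨mid, hmid⟩ := List.prefix_of_prefix_length_le (List.prefix_append _ _)
    (show t₂.pre <+: t₁.src from h ▸ List.prefix_append _ _) hle
  obtain ⟨p, a₁, b₁, c₁, q₁⟩ := t₁
  obtain ⟨p₂, a₂, b₂, c₂, q₂⟩ := t₂
  simp only at hmid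
  subst hmid
  simp only [Step.src, List.append_assoc, List.append_cancel_left_eq] at h hpos
  simp only [Step.Valid] at hv₁ hv₂
  match mid, h with
  | [], h =>
    obtain ⟨rfl, rfl, rfl, rfl⟩ := by simpa using h
    simp only [List.append_nil]
    exact ⟨_, .refl, .refl⟩
  | [_], h =>
    obtain ⟨-, rfl, rfl, -⟩ := by simpa using h
    linarith [hv₁.2, hv₂.1]
  | [_, _], h =>
    obtain ⟨rfl, rfl, rfl, rfl⟩ := by simpa using h
    have := recolourStep_overlap hpos hv₁.1 hv₁.2 hv₂.1 hv₂.2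
    exact ⟨_, .single this.1, .single (by simpa [Step.tgt] using this.2)⟩
  | _ :: _ :: _ :: r, h =>
    obtain ⟨rfl, rfl, rfl, rfl⟩ := by simpa using h
    have := recolourStep_disjoint hpos hv₁ hv₂
    exact ⟨_, .single this.1, .single (by simpa [Step.tgt] using this.2)⟩

lemma RecolourStep.diamond {a b c : List ℝ} (hab : RecolourStep a b) (hac : RecolourStep a c) :
    ∃ d, ReflGen RecolourStep b d ∧ ReflGen RecolourStep c d := by
  obtain ⟨hpos, t₁, hv₁, rfl, rfl⟩ := hab
  obtain ⟨-, t₂, hv₂, h, rfl⟩ := hac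
  rcases le_total t₁.pre.length t₂.pre.length with hle | hle
  · exact Step.exists_join_of_length_pre_le h.symm hv₁ hv₂ hpos hle
  · obtain ⟨d, h₂, h₁⟩ := Step.exists_join_of_length_pre_le h hv₂ hv₁ (h ▸ hpos) hle
    exact ⟨d, h₁, h₂⟩

lemma IsClosedConfig.eq_of_reflTransGen {m d : List ℝ} (hm : IsClosedConfig m)
    (h : ReflTransGen RecolourStep m d) : d = m := by
  rcases h.cases_head with rfl | ⟨_, ⟨-, s, hs, hsrc, -⟩, -⟩
  · rfl
  · exact absurd hsrc (hm s hs)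

lemma IsClosedConfig.unique {l m₁ m₂ : List ℝ} (h₁ : ReflTransGen RecolourStep l m₁)
    (h₂ : ReflTransGen RecolourStep l m₂) (hc₁ : IsClosedConfig m₁) (hc₂ : IsClosedConfig m₂) :
    m₁ = m₂ := by
  obtain ⟨d, h₁d, h₂d⟩ := church_rosser (r := RecolourStep) (fun _ _ _ hb hc =>
    (RecolourStep.diamond hb hc).imp fun _ hd => ⟨hd.1, hd.2.to_reflTransGen⟩) h₁ h₂
  rw [← hc₁.eq_of_reflTransGen h₁d, hc₂.eq_of_reflTransGen h₂d]

lemma isClosedConfig_singleton (x : ℝ) : IsClosedConfig [x] := by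
  intro s _ hsrc
  have := congrArg List.length hsrc
  rw [s.length_src] at this
  simp at this

lemma IsClosedConfig.of_infix {l l' : List ℝ} (hl' : IsClosedConfig l') (h : l <:+: l') :
    IsClosedConfig l := by
  rintro s hs rfl
  obtain ⟨p, q, rfl⟩ := h
  exact hl' ⟨p ++ s.pre, s.a, s.b, s.c, s.post ++ q⟩ hs (by simp [Step.src])

lemma Nondegenerate.of_sum_take {l l' : List ℝ} (h : Nondegenerate l) (f : ℕ → ℕ)
    (hf : StrictMono f) (hlen : f l'.length ≤ l.length)
    (hsum : ∀ j, (l'.take j).sum = (l.take (f j)).sum) : Nondegenerate l' := by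
  intro i j k hij hjk hk
  rw [hsum, hsum, hsum]
  exact h _ _ _ (hf hij) (hf hjk) ((hf.monotone hk).trans hlen)

lemma Nondegenerate.tgt {s : Step} (h : Nondegenerate s.src) : Nondegenerate s.tgt := by
  refine h.of_sum_take (fun j => if j ≤ s.pre.length then j else j + 2) ?_ ?_ s.sum_take_tgt
  · intro i j hij
    dsimp only
    split_ifs <;> omega
  · have : ¬s.tgt.length ≤ s.pre.length := by simp [Step.tgt]
    simp only [this, if_false, s.length_src, le_refl]

lemma Nondegenerate.of_reflTransGen {l m : List ℝ} (h : ReflTransGen RecolourStep l m)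
    (hl : Nondegenerate l) : Nondegenerate m := by
  induction h with
  | refl => exact hl
  | tail _ hstep ih =>
    obtain ⟨-, s, -, rfl, rfl⟩ := hstep
    exact ih.tgt

lemma Nondegenerate.isChain_ne {l : List ℝ} (h : Nondegenerate l) : l.IsChain (· ≠ ·) := by
  refine List.isChain_iff_getElem.2 fun i hi heq => h i (i + 1) (i + 2) (by omega) (by omega) hi ?_
  rw [List.sum_take_succ _ (i + 1) hi, List.sum_take_succ _ i (by omega)]
  linarith

lemma redSum_singleton (r : ℝ) : redSum [r] = r := by
  simp [redSum]

lemma redSum_cons_cons (a b : ℝ) (l : List ℝ) : redSum (a :: b :: l) = a + redSum l := by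
  have hmod : ∀ i, (i + 1 + 1) % 2 = i % 2 := by omega
  simp only [redSum, List.length_cons, Finset.sum_range_succ', List.getD_cons_succ,
    List.getD_cons_zero, hmod]
  simp [add_comm]

lemma redSum_nonneg {l : List ℝ} (h : ∀ x ∈ l, 0 < x) : 0 ≤ redSum l := by
  refine Finset.sum_nonneg fun i hi => ?_
  split_ifs
  · rw [List.getD_eq_getElem _ _ (Finset.mem_range.1 hi)]
    exact (h _ (List.getElem_mem _)).le
  · exact le_rfl

lemma le_redSum_cons {r : ℝ} {l : List ℝ} (hl : ∀ z ∈ l, 0 < z) : r ≤ redSum (r :: l) := by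
  cases l with
  | nil => rw [redSum_singleton]
  | cons b l =>
    rw [redSum_cons_cons]
    linarith [redSum_nonneg fun z hz => hl z (.tail _ hz)]

lemma IsClosedConfig.isChain_gt : ∀ {a b : ℝ} {l : List ℝ}, IsClosedConfig (a :: b :: l) →
    (a :: b :: l).IsChain (· ≠ ·) → b < a → (a :: b :: l).IsChain (· > ·)
  | _, _, [], _, _, hba => List.isChain_pair.2 hba
  | a, b, c :: l, hc, hne, hba => by
    have hcb : c < b := ((List.isChain_cons_cons.1 hne.tail).1.lt_or_gt).resolve_left
      fun hbc => hc ⟨[], a, b, c, l⟩ ⟨hba, hbc⟩ rfl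
    exact .cons_cons hba <|
      IsClosedConfig.isChain_gt (hc.of_infix (List.suffix_cons _ _).isInfix) hne.tail hcb

/-- A decreasing red-ended configuration is swallowed from the right: the last red interval
is the shortest one. -/
lemma reflTransGen_singleton_of_isChain_gt : ∀ {r x y : ℝ} {l : List ℝ}, l.length % 2 = 0 →
    (∀ z ∈ r :: l, 0 < z) → (r :: l).IsChain (· > ·) → 0 < x → r < x → redSum (r :: l) < y →
    ReflTransGen RecolourStep (x :: (r :: l) ++ [y]) [x + (r :: l).sum + y]
  | r, x, y, [], _, hpos, _, hx, hrx, hy => by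
    rw [redSum_singleton] at hy
    exact .single ⟨forall_mem_cons_append_pos hx ((hpos r (by simp)).trans hy) hpos,
      ⟨[], x, r, y, []⟩, ⟨hrx, hy⟩, rfl, by simp [Step.tgt]⟩
  | _, _, _, [_], hodd, _, _, _, _, _ => by simp at hodd
  | r, x, y, b :: r' :: l, hodd, hpos, hdec, hx, hrx, hy => by
    have hr := hpos r (by simp)
    have hb := hpos b (by simp)
    have hy' : redSum (r' :: l) < y := by
      rw [redSum_cons_cons] at hy
      linarith
    have hrest := reflTransGen_singleton_of_isChain_gt (x := b) (by simp at hodd; omega)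
      (fun z hz => hpos z (List.mem_cons_of_mem _ (List.mem_cons_of_mem _ hz)))
      hdec.tail.tail hb (List.isChain_cons_cons.1 hdec.tail).1 hy'
    have hsum := RecolourStep.reflTransGen_append_append (p := [x, r]) (q := [])
      (by simp [hx, hr]) (by simp) hrest
    simp only [List.append_nil, List.cons_append, List.nil_append] at hsum
    have hsum_nonneg : 0 ≤ (r' :: l).sum :=
      List.sum_nonneg fun z hz => (hpos z (by simp [hz])).le
    have hry : r < y := (le_redSum_cons fun z hz => hpos z (.tail _ hz)).trans_lt hy
    refine hsum.tail ⟨?_, ⟨[], x, r, b + (r' :: l).sum + y, []⟩, ⟨hrx, by linarith⟩, rfl, ?_⟩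
    · simp only [List.mem_cons, List.not_mem_nil, or_false]
      rintro z (rfl | rfl | rfl) <;> linarith
    · simp only [Step.tgt, List.nil_append, List.sum_cons]
      ring_nf

lemma reflTransGen_singleton_of_isClosedConfig : ∀ {m : List ℝ} {x y : ℝ}, m.length % 2 = 1 →
    (∀ z ∈ m, 0 < z) → IsClosedConfig m → m.IsChain (· ≠ ·) → redSum m < x → redSum m < y →
    ReflTransGen RecolourStep (x :: m ++ [y]) [x + m.sum + y]
  | [], _, _, hodd, _, _, _, _, _ => by simp at hodd
  | r :: l, x, y, hodd, hpos, hc, hne, hx, hy => by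
    have hr := hpos r (by simp)
    have hrx : r < x := (le_redSum_cons fun z hz => hpos z (.tail _ hz)).trans_lt hx
    by_cases hdec : (r :: l).IsChain (· > ·)
    · exact reflTransGen_singleton_of_isChain_gt (by simp at hodd; omega) hpos hdec (hr.trans hrx)
        hrx hy
    obtain ⟨b, l, rfl⟩ : ∃ b l', l = b :: l' := by
      cases l with
      | nil => exact absurd (List.isChain_singleton r) hdec
      | cons b l => exact ⟨b, l, rfl⟩
    have hrb : r < b := ((List.isChain_cons_cons.1 hne).1.lt_or_gt).resolve_right
      fun hbr => hdec (hc.isChain_gt hne hbr)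
    have hry : r < y := (le_redSum_cons fun z hz => hpos z (.tail _ hz)).trans_lt hy
    rw [redSum_cons_cons] at hx hy
    have hrest := reflTransGen_singleton_of_isClosedConfig (m := l) (x := x + r + b) (y := y)
      (by simp at hodd; omega) (fun z hz => hpos z (by simp [hz]))
      (hc.of_infix ⟨[r, b], [], by simp⟩) hne.tail.tail (by linarith) (by linarith)
    rw [show x + (r :: b :: l).sum + y = x + r + b + l.sum + y by simp only [List.sum_cons]; ring]
    exact .head ⟨forall_mem_cons_append_pos (hr.trans hrx) (hr.trans hry) hpos,
      ⟨[], x, r, b, l ++ [y]⟩, ⟨hrx, hrb⟩, rfl, rfl⟩ hrest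

theorem closure_eq_single_blue_interval_general
    (l : List ℝ) (bm bp : ℝ) (hodd : l.length % 2 = 1)
    (hpos : ∀ x ∈ l, 0 < x)
    (hnd : Nondegenerate (bm :: l ++ [bp]))
    (s : List Step) (m : List ℝ) (h : Reduces l s m) (hc : IsClosedConfig m)
    (hgtm : redSum m < bm) (hgtp : redSum m < bp)
    (s' : List Step) (m' : List ℝ)
    (h' : Reduces (bm :: l ++ [bp]) s' m') (hc' : IsClosedConfig m') :
    m' = [bm + l.sum + bp] := by
  have hmpos : ∀ x ∈ m, 0 < x := h.pos hpos
  have hbm : 0 < bm := (redSum_nonneg hmpos).trans_lt hgtm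
  have hbp : 0 < bp := (redSum_nonneg hmpos).trans_lt hgtp
  have hflank : ReflTransGen RecolourStep (bm :: l ++ [bp]) (bm :: m ++ [bp]) :=
    RecolourStep.reflTransGen_append_append (p := [bm]) (by simpa) (by simpa)
      (h.reflTransGen hpos)
  have hne : m.IsChain (· ≠ ·) :=
    (hnd.of_reflTransGen hflank).isChain_ne.left_of_append.tail
  have hend := reflTransGen_singleton_of_isClosedConfig (h.length_mod_two.trans hodd) hmpos hc
    hne hgtm hgtp
  rw [h.sum_eq] at hend
  exact IsClosedConfig.unique (h'.reflTransGen (forall_mem_cons_append_pos hbm hbp hpos))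
    (hflank.trans hend) hc' (isClosedConfig_singleton _)

/-- If `B₋`, `B₊` are blue intervals and `C` is a red-ended
coloured-interval with `|B₋| > r(C)` and `|B₊| > r(C)`, then the closure of `B₋ + C + B₊`
is a single (blue) interval, of the full length. -/
theorem closure_eq_single_blue_interval
    (l : List ℝ) (bm bp : ℝ) (hodd : l.length % 2 = 1)
    (hpos : ∀ x ∈ l, 0 < x) (hbm : 0 < bm) (hbp : 0 < bp)
    (hnd : Nondegenerate (bm :: l ++ [bp]))
    (s : List Step) (m : List ℝ) (h : Reduces l s m) (hc : IsClosedConfig m)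
    (hgtm : redSum m < bm) (hgtp : redSum m < bp)
    (s' : List Step) (m' : List ℝ)
    (h' : Reduces (bm :: l ++ [bp]) s' m') (hc' : IsClosedConfig m') :
    m' = [bm + l.sum + bp] :=
  closure_eq_single_blue_interval_general l bm bp hodd hpos hnd s m h hc hgtm hgtp s' m' h' hc'
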